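/- arXiv:2311.07927 — 3 statements merged into one kernel-verified Lean document; each statement's English description precedes it below -/
import Mathlib

section
/- If F satisfies assumption (A), then every minimizer of Ψ_F is a strict weakly l-efficient solution: arg min(Ψ_F) ⊆ l-SWEff(F). -/
open Pointwise

/-- The Gerstewitz scalarization function `ψ^q_P(y) = sup {t : ℝ | y ∈ t • q + P}`. -/
noncomputable def psi {Y : Type*} [AddCommGroup Y] [Module ℝ Y] (P : Set Y) (q : Y) (y : Y) : ℝ :=
  sSup {t : ℝ | y - t • q ∈ P}

/-- The scalarization of the set-valued map `F`: `Ψ_F(x) = inf_{z ∈ F(x)} ψ^q_P(z)`. -/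
noncomputable def PsiF {X Y : Type*} [AddCommGroup Y] [Module ℝ Y]
    (P : Set Y) (q : Y) (F : X → Set Y) (x : X) : EReal :=
  ⨅ z ∈ F x, ((psi P q z : ℝ) : EReal)

/-- Assumption (A): `ψ^q_P` attains its infimum on `F(x)` for all `x`. -/
def AssumptionA {X Y : Type*} [AddCommGroup Y] [Module ℝ Y]
    (P : Set Y) (q : Y) (F : X → Set Y) : Prop :=
  ∀ x : X, ∃ z ∈ F x, ∀ w ∈ F x, psi P q z ≤ psi P q w

/-- `x̄` is a strict weakly `l`-efficient solution of (SOP): there is no `x ≠ x̄`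
with `F(x̄) ⊆ F(x) + int P`. -/
def SWEff {X Y : Type*} [AddCommGroup Y] [Module ℝ Y] [TopologicalSpace Y]
    (P : Set Y) (F : X → Set Y) (xbar : X) : Prop :=
  ¬ ∃ x : X, x ≠ xbar ∧ F xbar ⊆ F x + interior P

/-!
Let `x̄` minimize `Ψ_F` and suppose `F(x̄) ⊆ F(x) + int P`. Write a minimizer `z̄` of `ψ` on `F(x̄)`
as `w + r` with `w ∈ F(x)` and `r ∈ int P`. Since `r - ε • q ∈ P` for some `ε > 0` and `P + P ⊆ P`,
`ψ(z̄) ≥ ψ(w) + ε > Ψ_F(x) ≥ Ψ_F(x̄) = ψ(z̄)`. The suprema defining `ψ` are over nonempty sets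
that are bounded above, because `q ∈ int P` and `-q ∉ P`.
-/

lemma add_mem_of_convex_cone {Y : Type*} [AddCommGroup Y] [Module ℝ Y] {P : Set Y}
    (hPconv : Convex ℝ P) (hPcone : ∀ c : ℝ, 0 < c → ∀ y ∈ P, c • y ∈ P) {a b : Y}
    (ha : a ∈ P) (hb : b ∈ P) : a + b ∈ P := by
  have hmid := hPcone 2 two_pos _ (hPconv ha hb (by norm_num : (0 : ℝ) ≤ 1 / 2)
    (by norm_num : (0 : ℝ) ≤ 1 / 2) (by norm_num))
  rwa [smul_add, smul_smul, smul_smul, show (2 : ℝ) * (1 / 2) = 1 by norm_num,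
    one_smul, one_smul] at hmid

section Cone

variable {Y : Type*} [AddCommGroup Y] [Module ℝ Y] [TopologicalSpace Y]
  [IsTopologicalAddGroup Y] [ContinuousSMul ℝ Y] {P : Set Y}

lemma exists_pos_add_smul_mem_of_mem_interior {y : Y} (hy : y ∈ interior P) (v : Y) :
    ∃ s : ℝ, 0 < s ∧ y + s • v ∈ P := by
  have hcont : Filter.Tendsto (fun s : ℝ => y + s • v) (nhdsWithin 0 (Set.Ioi 0)) (nhds y) := by
    refine tendsto_nhdsWithin_of_tendsto_nhds ?_
    have h : Continuous fun s : ℝ => y + s • v := by fun_prop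
    simpa using h.tendsto 0
  obtain ⟨s, hsP, hs⟩ :=
    ((hcont.eventually (mem_interior_iff_mem_nhds.1 hy)).and self_mem_nhdsWithin).exists
  exact ⟨s, hs, hsP⟩

variable (hPconv : Convex ℝ P) (hPcone : ∀ c : ℝ, 0 < c → ∀ y ∈ P, c • y ∈ P)
  {q : Y} (hq : q ∈ interior P)
include hPcone hq

include hPconv in
lemma neg_notMem_of_mem_interior (hPuniv : P ≠ Set.univ) : -q ∉ P := by
  intro hnq
  refine hPuniv (Set.eq_univ_of_forall fun y => ?_)
  obtain ⟨s, hs, hsy⟩ := exists_pos_add_smul_mem_of_mem_interior hq y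
  have hsum := add_mem_of_convex_cone hPconv hPcone hsy hnq
  rw [add_neg_cancel_comm] at hsum
  simpa [smul_smul, inv_mul_cancel₀ hs.ne'] using hPcone s⁻¹ (inv_pos.2 hs) _ hsum

lemma psi_set_nonempty (y : Y) : {t : ℝ | y - t • q ∈ P}.Nonempty := by
  obtain ⟨s, hs, hsy⟩ := exists_pos_add_smul_mem_of_mem_interior hq y
  refine ⟨-s⁻¹, ?_⟩
  have h := hPcone s⁻¹ (inv_pos.2 hs) _ hsy
  rwa [smul_add, inv_smul_smul₀ hs.ne', add_comm, ← sub_neg_eq_add, ← neg_smul] at h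

include hPconv in
lemma psi_set_bddAbove (hPuniv : P ≠ Set.univ) (y : Y) : BddAbove {t : ℝ | y - t • q ∈ P} := by
  obtain ⟨s, hs, hsy⟩ := exists_pos_add_smul_mem_of_mem_interior hq (-y)
  refine ⟨s⁻¹, fun t ht => ?_⟩
  by_contra! hlt
  have hcoef : 0 < s * t - 1 := by
    have := mul_lt_mul_of_pos_left hlt hs
    rw [mul_inv_cancel₀ hs.ne'] at this
    linarith
  have hsum := add_mem_of_convex_cone hPconv hPcone (hPcone s hs _ ht) hsy
  have heq : s • (y - t • q) + (q + s • -y) = (s * t - 1) • -q := by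
    rw [smul_sub, smul_neg, smul_neg, smul_smul, sub_smul, one_smul]; abel
  rw [heq] at hsum
  have hnq := hPcone (s * t - 1)⁻¹ (inv_pos.2 hcoef) _ hsum
  rw [inv_smul_smul₀ hcoef.ne'] at hnq
  exact neg_notMem_of_mem_interior hPconv hPcone hq hPuniv hnq

include hPconv in
lemma psi_lt_psi_add_of_mem_interior (hPuniv : P ≠ Set.univ) (w : Y) {r : Y}
    (hr : r ∈ interior P) : psi P q w < psi P q (w + r) := by
  obtain ⟨ε, hε, hrε⟩ : ∃ ε : ℝ, 0 < ε ∧ r - ε • q ∈ P := by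
    simpa [sub_eq_add_neg] using exists_pos_add_smul_mem_of_mem_interior hr (-q)
  suffices psi P q w ≤ psi P q (w + r) - ε by linarith
  refine csSup_le (psi_set_nonempty hPcone hq w) fun t ht => ?_
  have hshift : w + r - (t + ε) • q ∈ P := by
    convert add_mem_of_convex_cone hPconv hPcone ht hrε using 1
    rw [add_smul]; abel
  have := le_csSup (psi_set_bddAbove hPconv hPcone hq hPuniv (w + r)) hshift
  rw [psi]
  linarith

end Cone

lemma PsiF_eq_psi_of_forall_le {X Y : Type*} [AddCommGroup Y] [Module ℝ Y] {P : Set Y} {q : Y}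
    {F : X → Set Y} {x : X} {z : Y} (hz : z ∈ F x) (hmin : ∀ w ∈ F x, psi P q z ≤ psi P q w) :
    PsiF P q F x = psi P q z :=
  le_antisymm (iInf₂_le z hz) (le_iInf₂ fun w hw => EReal.coe_le_coe_iff.2 (hmin w hw))

theorem stmt8_general {X Y : Type*}
    [AddCommGroup Y] [Module ℝ Y] [TopologicalSpace Y]
    [IsTopologicalAddGroup Y] [ContinuousSMul ℝ Y]
    (P : Set Y) (hPconv : Convex ℝ P)
    (hPcone : ∀ c : ℝ, 0 < c → ∀ y ∈ P, c • y ∈ P)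
    (hPuniv : P ≠ Set.univ)
    (q : Y) (hq : q ∈ interior P)
    (F : X → Set Y)
    (hA : AssumptionA P q F) :
    {x : X | PsiF P q F x = ⨅ x' : X, PsiF P q F x'} ⊆ {x : X | SWEff P F x} := by
  rintro xbar hxbar ⟨x, -, hsub⟩
  obtain ⟨zbar, hzbar, hzmin⟩ := hA xbar
  obtain ⟨w, hw, r, hr, rfl⟩ := hsub hzbar
  have hle : (psi P q (w + r) : EReal) ≤ psi P q w :=
    calc (psi P q (w + r) : EReal) = PsiF P q F xbar := (PsiF_eq_psi_of_forall_le hzbar hzmin).symm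
      _ = ⨅ x', PsiF P q F x' := hxbar
      _ ≤ PsiF P q F x := iInf_le _ x
      _ ≤ psi P q w := iInf₂_le w hw
  exact (psi_lt_psi_add_of_mem_interior hPconv hPcone hq hPuniv w hr).not_ge
    (EReal.coe_le_coe_iff.1 hle)

/-- If `F` satisfies assumption (A), then `arg min Ψ_F ⊆ l-SWEff(F)`. -/
theorem stmt8 {X Y : Type*} [TopologicalSpace X] [T2Space X]
    [AddCommGroup Y] [Module ℝ Y] [TopologicalSpace Y]
    [IsTopologicalAddGroup Y] [ContinuousSMul ℝ Y] [T2Space Y]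
    (P : Set Y) (hPclosed : IsClosed P) (hPconv : Convex ℝ P)
    (hP0 : (0 : Y) ∈ P) (hPcone : ∀ c : ℝ, 0 < c → ∀ y ∈ P, c • y ∈ P)
    (hPne : P ≠ {0}) (hPuniv : P ≠ Set.univ)
    (q : Y) (hq : q ∈ interior P)
    (F : X → Set Y) (hF : ∀ x, (F x).Nonempty)
    (hA : AssumptionA P q F) :
    {x : X | PsiF P q F x = ⨅ x' : X, PsiF P q F x'} ⊆ {x : X | SWEff P F x} :=
  stmt8_general P hPconv hPcone hPuniv q hq F hA
end

section
/- F is q-srgi if and only if Ψ_F is regular-global-inf (rgi) on X, where Ψ_F is rgi at x₀ means: if Ψ_F(x₀) > inf_{x ∈ X} Ψ_F(x), then there exist a neighborhood U of x₀ and a real c > inf_{x ∈ X} Ψ_F(x) such that Ψ_F(x) > c for all x ∈ U (all inequalities in the extended reals). -/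
open Pointwise

/-- The colevel set of `F` at height `λ • q`:
`Colev_{<ˡ}(F, λq) = {x ∈ X : F(x) ⊄ λ • q + int P}`. -/
def Colev {X Y : Type*} [AddCommGroup Y] [Module ℝ Y] [TopologicalSpace Y]
    (P : Set Y) (q : Y) (F : X → Set Y) (lam : ℝ) : Set X :=
  {x | ¬ F x ⊆ {y : Y | y - lam • q ∈ interior P}}

/-- `M_F^q = sup {t ∈ ℝ : F(X) ⊆ t • q + P} ∈ ℝ ∪ {±∞}` (with `sup ∅ = -∞`). -/
noncomputable def Mq {X Y : Type*} [AddCommGroup Y] [Module ℝ Y]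
    (P : Set Y) (q : Y) (F : X → Set Y) : EReal :=
  sSup ((fun t : ℝ => (t : EReal)) '' {t : ℝ | ∀ x : X, ∀ z ∈ F x, z - t • q ∈ P})

/-- `F` is `q`-srgi: if `λ > M_F^q` and `x₀ ∉ Colev_{<ˡ}(F, λq)`, then there exist a
neighborhood `U` of `x₀` and a real `r > M_F^q` with `U ∩ Colev_{<ˡ}(F, rq) = ∅`. -/
def Srgi {X Y : Type*} [TopologicalSpace X] [AddCommGroup Y] [Module ℝ Y] [TopologicalSpace Y]
    (P : Set Y) (q : Y) (F : X → Set Y) : Prop :=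
  ∀ lam : ℝ, Mq P q F < (lam : EReal) → ∀ x₀ : X, x₀ ∉ Colev P q F lam →
    ∃ U ∈ nhds x₀, ∃ r : ℝ, Mq P q F < (r : EReal) ∧ U ∩ Colev P q F r = ∅

/-! For a closed convex cone `P ≠ Y` and `q ∈ int P`, the superlevel sets of the Gerstewitz
function are translates of the cone: `t ≤ ψ(y) ↔ y ∈ t • q + P`, while `t < ψ(y)` forces
`y ∈ t • q + int P`. Hence `↑t ≤ Ψ_F(x) ↔ F(x) ⊆ t • q + P`, so `M_F^q = inf Ψ_F`, and
`x ∉ Colev(F, λq)` lies between `λ < Ψ_F(x)` and `λ ≤ Ψ_F(x)`. A strict inequality between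
extended reals can always be split by a real number, which absorbs this gap in both directions
of the equivalence. -/

open Set Filter Topology

theorem EReal.sSup_coe_image_setOf_coe_le (m : EReal) :
    sSup ((fun t : ℝ => (t : EReal)) '' {t : ℝ | (t : EReal) ≤ m}) = m := by
  refine le_antisymm (sSup_le <| by rintro _ ⟨t, ht, rfl⟩; exact ht)
    (le_of_forall_lt fun c hc => ?_)
  obtain ⟨r, hcr, hrm⟩ := EReal.exists_between_coe_real hc
  exact hcr.trans_le (le_sSup ⟨r, hrm.le, rfl⟩)

theorem Convex.add_mem_of_forall_smul_mem {E : Type*} [AddCommGroup E] [Module ℝ E] {s : Set E}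
    (hs : Convex ℝ s) (hsmul : ∀ c : ℝ, 0 < c → ∀ y ∈ s, c • y ∈ s) {a b : E} (ha : a ∈ s)
    (hb : b ∈ s) : a + b ∈ s := by
  have hmid : (1 / 2 : ℝ) • a + (1 / 2 : ℝ) • b ∈ s :=
    hs ha hb (by norm_num) (by norm_num) (by norm_num)
  convert hsmul 2 two_pos _ hmid using 1
  module

section Gerstewitz

variable {Y : Type*} [AddCommGroup Y] [Module ℝ Y] [TopologicalSpace Y] {C : ConvexCone ℝ Y}

theorem exists_pos_add_smul_mem_of_mem_interior_s12 [ContinuousAdd Y] [ContinuousSMul ℝ Y]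
    {s : Set Y} {x : Y} (hx : x ∈ interior s) (v : Y) : ∃ ε : ℝ, 0 < ε ∧ x + ε • v ∈ s := by
  have hlim : Tendsto (fun t : ℝ => x + t • v) (𝓝[>] 0) (𝓝 x) :=
    ((continuous_const.add (continuous_id.smul continuous_const)).tendsto' 0 x
      (by simp)).mono_left nhdsWithin_le_nhds
  obtain ⟨ε, hεs, hεpos⟩ :=
    ((hlim.eventually (mem_interior_iff_mem_nhds.1 hx)).and self_mem_nhdsWithin).exists
  exact ⟨ε, hεpos, hεs⟩

theorem ConvexCone.add_mem_interior [IsTopologicalAddGroup Y] {x y : Y}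
    (hx : x ∈ interior (C : Set Y)) (hy : y ∈ C) : x + y ∈ interior (C : Set Y) := by
  refine interior_maximal (t := (· - y) ⁻¹' interior (C : Set Y)) (fun z hz => ?_)
    (isOpen_interior.preimage (continuous_sub_right y))
    (show x + y ∈ (· - y) ⁻¹' interior (C : Set Y) by simpa using hx)
  simpa using C.add_mem (interior_subset hz) hy

theorem ConvexCone.smul_mem_interior [ContinuousSMul ℝ Y] {c : ℝ} (hc : 0 < c) {x : Y}
    (hx : x ∈ interior (C : Set Y)) : c • x ∈ interior (C : Set Y) := by
  have hsub : c • (C : Set Y) ⊆ C := by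
    rintro _ ⟨y, hy, rfl⟩
    exact C.smul_mem hc hy
  refine interior_mono hsub ?_
  rw [interior_smul₀ hc.ne']
  exact smul_mem_smul_set hx

theorem ConvexCone.neg_notMem_of_mem_interior [IsTopologicalAddGroup Y] [ContinuousSMul ℝ Y]
    (hCuniv : (C : Set Y) ≠ univ) {q : Y} (hq : q ∈ interior (C : Set Y)) : -q ∉ C := by
  intro hneg
  have h0 : (0 : Y) ∈ interior (C : Set Y) := by simpa using C.add_mem_interior hq hneg
  refine hCuniv (eq_univ_of_forall fun y => ?_)
  obtain ⟨ε, hε, hεy⟩ := exists_pos_add_smul_mem_of_mem_interior_s12 h0 y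
  rw [zero_add] at hεy
  exact (C.smul_mem_iff hε).1 hεy

variable [IsTopologicalAddGroup Y] [ContinuousSMul ℝ Y] {q : Y}

theorem nonempty_setOf_sub_smul_mem (hq : q ∈ interior (C : Set Y)) (y : Y) :
    {t : ℝ | y - t • q ∈ C}.Nonempty := by
  obtain ⟨ε, hε, hqy⟩ := exists_pos_add_smul_mem_of_mem_interior_s12 hq y
  have hscaled := C.smul_mem (inv_pos.2 hε) hqy
  rw [smul_add, smul_smul, inv_mul_cancel₀ hε.ne', one_smul] at hscaled
  exact ⟨-ε⁻¹, by rwa [mem_ofPred_eq, neg_smul, sub_neg_eq_add, add_comm]⟩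

theorem bddAbove_setOf_sub_smul_mem (hCclosed : IsClosed (C : Set Y))
    (hCuniv : (C : Set Y) ≠ univ) (hq : q ∈ interior (C : Set Y)) (y : Y) :
    BddAbove {t : ℝ | y - t • q ∈ C} := by
  by_contra hunbdd
  -- otherwise `t⁻¹ • y - q ∈ C` for arbitrarily large `t`, and these points tend to `-q`
  have hfreq : ∃ᶠ t : ℝ in atTop, y - t • q ∈ C := by
    rw [not_bddAbove_iff] at hunbdd
    exact frequently_atTop.2 fun a => (hunbdd a).imp fun t ⟨ht, hat⟩ => ⟨hat.le, ht⟩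
  have hlim : Tendsto (fun t : ℝ => t⁻¹ • y - q) atTop (𝓝 (-q)) := by
    simpa using ((tendsto_inv_atTop_zero (𝕜 := ℝ)).smul_const y).sub_const q
  refine C.neg_notMem_of_mem_interior hCuniv hq (hCclosed.mem_of_frequently_of_tendsto ?_ hlim)
  refine (hfreq.and_eventually (eventually_gt_atTop 0)).mono fun t ⟨ht, htpos⟩ => ?_
  simpa [smul_sub, smul_smul, inv_mul_cancel₀ htpos.ne'] using C.smul_mem (inv_pos.2 htpos) ht

theorem setOf_sub_smul_mem_eq_Iic_psi (hCclosed : IsClosed (C : Set Y))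
    (hCuniv : (C : Set Y) ≠ univ) (hq : q ∈ interior (C : Set Y)) (y : Y) :
    {t : ℝ | y - t • q ∈ C} = Iic (psi C q y) := by
  have hbdd := bddAbove_setOf_sub_smul_mem hCclosed hCuniv hq y
  have hpsi : y - psi C q y • q ∈ C :=
    (hCclosed.preimage (continuous_const.sub (continuous_id.smul continuous_const))).csSup_mem
      (nonempty_setOf_sub_smul_mem hq y) hbdd
  ext t
  refine ⟨fun ht => le_csSup hbdd ht, fun ht => ?_⟩
  rcases (mem_Iic.1 ht).eq_or_lt with rfl | hlt
  · exact hpsi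
  · have hsum := C.add_mem hpsi (C.smul_mem (sub_pos.2 hlt) (interior_subset hq))
    rwa [sub_smul, sub_add_sub_cancel] at hsum

theorem le_psi_iff (hCclosed : IsClosed (C : Set Y)) (hCuniv : (C : Set Y) ≠ univ)
    (hq : q ∈ interior (C : Set Y)) {y : Y} {t : ℝ} : t ≤ psi C q y ↔ y - t • q ∈ C := by
  rw [← mem_Iic, ← setOf_sub_smul_mem_eq_Iic_psi hCclosed hCuniv hq, mem_ofPred_eq]

theorem sub_smul_mem_interior_of_lt_psi (hCclosed : IsClosed (C : Set Y))
    (hCuniv : (C : Set Y) ≠ univ) (hq : q ∈ interior (C : Set Y)) {y : Y} {t : ℝ}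
    (h : t < psi C q y) : y - t • q ∈ interior (C : Set Y) := by
  have hsum := C.add_mem_interior (C.smul_mem_interior (sub_pos.2 h) hq)
    ((le_psi_iff hCclosed hCuniv hq (y := y)).1 le_rfl)
  rwa [sub_smul, sub_add_sub_cancel'] at hsum

variable {X : Type*} {F : X → Set Y}

theorem coe_le_PsiF_iff (hCclosed : IsClosed (C : Set Y)) (hCuniv : (C : Set Y) ≠ univ)
    (hq : q ∈ interior (C : Set Y)) {x : X} {t : ℝ} :
    (t : EReal) ≤ PsiF C q F x ↔ ∀ z ∈ F x, z - t • q ∈ C := by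
  simp only [PsiF, le_iInf₂_iff, EReal.coe_le_coe_iff, le_psi_iff hCclosed hCuniv hq]

theorem Mq_eq_iInf_PsiF (hCclosed : IsClosed (C : Set Y)) (hCuniv : (C : Set Y) ≠ univ)
    (hq : q ∈ interior (C : Set Y)) : Mq C q F = ⨅ x, PsiF C q F x := by
  rw [Mq, ← EReal.sSup_coe_image_setOf_coe_le (⨅ x, PsiF C q F x)]
  congr 2
  ext t
  simp only [mem_ofPred_eq, SetLike.mem_coe, le_iInf_iff, coe_le_PsiF_iff hCclosed hCuniv hq]

theorem notMem_Colev_of_coe_lt_PsiF (hCclosed : IsClosed (C : Set Y))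
    (hCuniv : (C : Set Y) ≠ univ) (hq : q ∈ interior (C : Set Y)) {x : X} {r : ℝ}
    (h : (r : EReal) < PsiF C q F x) : x ∉ Colev C q F r := by
  rw [Colev, mem_ofPred_eq, not_not]
  exact fun z hz => sub_smul_mem_interior_of_lt_psi hCclosed hCuniv hq
    (EReal.coe_lt_coe_iff.1 (h.trans_le (iInf₂_le z hz)))

theorem coe_le_PsiF_of_notMem_Colev (hCclosed : IsClosed (C : Set Y))
    (hCuniv : (C : Set Y) ≠ univ) (hq : q ∈ interior (C : Set Y)) {x : X} {r : ℝ}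
    (h : x ∉ Colev C q F r) : (r : EReal) ≤ PsiF C q F x :=
  (coe_le_PsiF_iff hCclosed hCuniv hq).2 fun _ hz => interior_subset (not_not.1 h hz)

end Gerstewitz

theorem stmt12_general {X Y : Type*} [TopologicalSpace X]
    [AddCommGroup Y] [Module ℝ Y] [TopologicalSpace Y]
    [IsTopologicalAddGroup Y] [ContinuousSMul ℝ Y]
    (P : Set Y) (hPclosed : IsClosed P) (hPconv : Convex ℝ P)
    (hPcone : ∀ c : ℝ, 0 < c → ∀ y ∈ P, c • y ∈ P)
    (hPuniv : P ≠ Set.univ)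
    (q : Y) (hq : q ∈ interior P)
    (F : X → Set Y) :
    Srgi P q F ↔
      ∀ x₀ : X, (⨅ x : X, PsiF P q F x) < PsiF P q F x₀ →
        ∃ U ∈ nhds x₀, ∃ c : ℝ, (⨅ x : X, PsiF P q F x) < (c : EReal) ∧
          ∀ x ∈ U, (c : EReal) < PsiF P q F x := by
  obtain ⟨C, rfl⟩ : ∃ C : ConvexCone ℝ Y, (C : Set Y) = P :=
    ⟨⟨P, fun c hc y hy => hPcone c hc y hy,
      fun a ha b hb => hPconv.add_mem_of_forall_smul_mem hPcone ha hb⟩, rfl⟩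
  simp only [Srgi, Mq_eq_iInf_PsiF hPclosed hPuniv hq]
  constructor
  · intro hsrgi x₀ hx₀
    obtain ⟨lam, hlam, hlamx₀⟩ := EReal.exists_between_coe_real hx₀
    obtain ⟨U, hU, r, hr, hUr⟩ :=
      hsrgi lam hlam x₀ (notMem_Colev_of_coe_lt_PsiF hPclosed hPuniv hq hlamx₀)
    obtain ⟨c, hc, hcr⟩ := EReal.exists_between_coe_real hr
    refine ⟨U, hU, c, hc, fun x hx => hcr.trans_le ?_⟩
    exact coe_le_PsiF_of_notMem_Colev hPclosed hPuniv hq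
      fun hxr => eq_empty_iff_forall_notMem.1 hUr x ⟨hx, hxr⟩
  · intro hrgi lam hlam x₀ hx₀
    obtain ⟨U, hU, c, hc, hcU⟩ :=
      hrgi x₀ (hlam.trans_le (coe_le_PsiF_of_notMem_Colev hPclosed hPuniv hq hx₀))
    exact ⟨U, hU, c, hc, eq_empty_iff_forall_notMem.2 fun x ⟨hxU, hxc⟩ =>
      notMem_Colev_of_coe_lt_PsiF hPclosed hPuniv hq (hcU x hxU) hxc⟩

/-- `F` is `q`-srgi iff `Ψ_F` is regular-global-inf (rgi) on `X`. -/
theorem stmt12 {X Y : Type*} [TopologicalSpace X] [T2Space X]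
    [AddCommGroup Y] [Module ℝ Y] [TopologicalSpace Y]
    [IsTopologicalAddGroup Y] [ContinuousSMul ℝ Y] [T2Space Y]
    (P : Set Y) (hPclosed : IsClosed P) (hPconv : Convex ℝ P)
    (hP0 : (0 : Y) ∈ P) (hPcone : ∀ c : ℝ, 0 < c → ∀ y ∈ P, c • y ∈ P)
    (hPne : P ≠ {0}) (hPuniv : P ≠ Set.univ)
    (q : Y) (hq : q ∈ interior P)
    (F : X → Set Y) (hF : ∀ x, (F x).Nonempty) :
    Srgi P q F ↔
      ∀ x₀ : X, (⨅ x : X, PsiF P q F x) < PsiF P q F x₀ →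
        ∃ U ∈ nhds x₀, ∃ c : ℝ, (⨅ x : X, PsiF P q F x) < (c : EReal) ∧
          ∀ x ∈ U, (c : EReal) < PsiF P q F x :=
  stmt12_general P hPclosed hPconv hPcone hPuniv q hq F
end

section
/- Suppose (E, σ) is first countable and F : K ⇉ Y satisfies assumption (A). Then F^{G,∞}_σ(u) > F^{G,∞}_σ(0) for all u ∈ K^∞_σ \ {0} if and only if for every real sequence (λ_n) with λ_n > M_F^q for all n and λ_n ↓ M_F^q, the σ-horizon outer limit satisfies limsup_n^{σ,∞} Colev_{<^l}(F, λ_n q) = {0}. -/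
open Filter Pointwise

/-- The `σ`-asymptotic cone of `A`. -/
def asympCone {E : Type*} [AddCommGroup E] [Module ℝ E]
    (σ : TopologicalSpace E) (A : Set E) : Set E :=
  {d | ∃ t : ℕ → ℝ, ∃ x : ℕ → E, Tendsto t atTop atTop ∧ (∀ k, x k ∈ A) ∧
    Tendsto (fun k => (t k)⁻¹ • x k) atTop (@nhds E σ d)}

/-- The `σ`-horizon outer limit of a sequence of sets. -/
def horizonLimsup {E : Type*} [AddCommGroup E] [Module ℝ E]
    (σ : TopologicalSpace E) (A : ℕ → Set E) : Set E :=
  {u | ∃ φ : ℕ → ℕ, StrictMono φ ∧ ∃ x : ℕ → E, ∃ t : ℕ → ℝ,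
    (∀ j, x j ∈ A (φ j)) ∧ Tendsto t atTop atTop ∧
    Tendsto (fun j => (t j)⁻¹ • x j) atTop (@nhds E σ u)}

/-- The colevel set of `F : K ⇉ Y` (a subset of `K`). -/
def ColevOn {E Y : Type*} [AddCommGroup Y] [Module ℝ Y] [TopologicalSpace Y]
    (P : Set Y) (q : Y) (K : Set E) (F : E → Set Y) (lam : ℝ) : Set E :=
  {x ∈ K | ¬ F x ⊆ {y : Y | y - lam • q ∈ interior P}}

/-- `M_F^q = sup {t ∈ ℝ : F(K) ⊆ t • q + P}` for `F : K ⇉ Y`. -/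
noncomputable def MqOn {E Y : Type*} [AddCommGroup Y] [Module ℝ Y]
    (P : Set Y) (q : Y) (K : Set E) (F : E → Set Y) : EReal :=
  sSup ((fun t : ℝ => (t : EReal)) '' {t : ℝ | ∀ x ∈ K, ∀ z ∈ F x, z - t • q ∈ P})

/-- The `qx-σ`-asymptotic function of `F : K ⇉ Y`. -/
noncomputable def FGasymp {E Y : Type*} [AddCommGroup E] [Module ℝ E]
    [AddCommGroup Y] [Module ℝ Y] [TopologicalSpace Y]
    (σ : TopologicalSpace E) (P : Set Y) (q : Y) (K : Set E) (F : E → Set Y) (u : E) : EReal :=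
  sInf ((fun lam : ℝ => (lam : EReal)) '' {lam : ℝ | u ∈ asympCone σ (ColevOn P q K F lam)})

/-!
Since `q ∈ int P`, the colevel sets `Colev(F, λq)` increase with `λ` and are nonempty for
`λ > M_F^q` and empty for `λ < M_F^q`; as the asymptotic cone of a nonempty set contains `0`,
this gives `F^{G,∞}_σ(0) = M_F^q`. So `F^{G,∞}_σ(u) ≤ F^{G,∞}_σ(0)` says exactly that `u` lies in
the asymptotic cone of every `Colev(F, λq)` with `λ > M_F^q`. By monotonicity every point of the
horizon outer limit along `λ_n ↓ M_F^q` has this property, and conversely, when `σ` is first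
countable, a diagonal argument puts every such `u` into that horizon outer limit. Such sequences
exist because `P ≠ Y` and `q ∈ int P` force `M_F^q < ∞`.
-/

open Topology

section Cone

variable {Y : Type*} [AddCommGroup Y] [Module ℝ Y] {P : Set Y}

theorem Convex.add_mem_of_forall_smul_mem_s19 (hPconv : Convex ℝ P)
    (hPcone : ∀ c : ℝ, 0 < c → ∀ y ∈ P, c • y ∈ P) {a b : Y} (ha : a ∈ P) (hb : b ∈ P) :
    a + b ∈ P := by
  have hmid := hPconv ha hb (by norm_num : (0 : ℝ) ≤ 2⁻¹) (by norm_num : (0 : ℝ) ≤ 2⁻¹)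
    (by norm_num)
  simpa [smul_add, smul_smul] using hPcone 2 two_pos _ hmid

variable [TopologicalSpace Y]

theorem tendsto_inv_smul_atTop_zero [ContinuousSMul ℝ Y] (y : Y) :
    Tendsto (fun t : ℝ => t⁻¹ • y) atTop (𝓝 0) := by
  simpa using (tendsto_inv_atTop_zero (𝕜 := ℝ)).smul_const y

theorem Convex.add_mem_interior_of_forall_smul_mem [ContinuousAdd Y] (hPconv : Convex ℝ P)
    (hPcone : ∀ c : ℝ, 0 < c → ∀ y ∈ P, c • y ∈ P) {a b : Y} (ha : a ∈ P)
    (hb : b ∈ interior P) : a + b ∈ interior P :=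
  interior_mono
    (Set.add_subset_iff.2 fun _ hx _ hy => hPconv.add_mem_of_forall_smul_mem_s19 hPcone hx hy)
    (subset_interior_add_right (Set.add_mem_add ha hb))

theorem smul_mem_interior_of_forall_smul_mem [ContinuousConstSMul ℝ Y]
    (hPcone : ∀ c : ℝ, 0 < c → ∀ y ∈ P, c • y ∈ P) {c : ℝ} (hc : 0 < c) {b : Y}
    (hb : b ∈ interior P) : c • b ∈ interior P := by
  have hsub : c • P ⊆ P := by
    rintro _ ⟨y, hy, rfl⟩
    exact hPcone c hc y hy
  exact interior_mono hsub (by rw [interior_smul₀ hc.ne']; exact Set.smul_mem_smul_set hb)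

variable [ContinuousAdd Y] {q : Y}

theorem sub_smul_mem_interior_of_le (hPconv : Convex ℝ P)
    (hPcone : ∀ c : ℝ, 0 < c → ∀ y ∈ P, c • y ∈ P) (hq : q ∈ P) {z : Y} {a b : ℝ}
    (hab : a ≤ b) (hz : z - b • q ∈ interior P) : z - a • q ∈ interior P := by
  rcases hab.eq_or_lt with rfl | hlt
  · exact hz
  have hshift := hPconv.add_mem_interior_of_forall_smul_mem hPcone
    (hPcone (b - a) (sub_pos.2 hlt) q hq) hz
  convert hshift using 1
  rw [sub_smul]
  abel

theorem sub_smul_mem_interior_of_lt [ContinuousConstSMul ℝ Y] (hPconv : Convex ℝ P)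
    (hPcone : ∀ c : ℝ, 0 < c → ∀ y ∈ P, c • y ∈ P) (hq : q ∈ interior P) {z : Y} {a b : ℝ}
    (hab : a < b) (hz : z - b • q ∈ P) : z - a • q ∈ interior P := by
  have hshift := hPconv.add_mem_interior_of_forall_smul_mem hPcone hz
    (smul_mem_interior_of_forall_smul_mem hPcone (sub_pos.2 hab) hq)
  convert hshift using 1
  rw [sub_smul]
  abel

variable [ContinuousSMul ℝ Y]

theorem neg_notMem_of_mem_interior_s19 (hPconv : Convex ℝ P)
    (hPcone : ∀ c : ℝ, 0 < c → ∀ y ∈ P, c • y ∈ P) (hPuniv : P ≠ Set.univ)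
    (hq : q ∈ interior P) : -q ∉ P := by
  intro hneg
  have h0 : (0 : Y) ∈ interior P := by
    simpa using hPconv.add_mem_interior_of_forall_smul_mem hPcone hneg hq
  refine hPuniv (Set.eq_univ_of_forall fun y => ?_)
  obtain ⟨t, ht, hty⟩ := ((eventually_gt_atTop 0).and
    ((tendsto_inv_smul_atTop_zero y).eventually_mem (isOpen_interior.mem_nhds h0))).exists
  simpa [smul_smul, ht.ne'] using hPcone t ht _ (interior_subset hty)

theorem bddAbove_setOf_sub_smul_mem_s19 (hPclosed : IsClosed P) (hPconv : Convex ℝ P)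
    (hPcone : ∀ c : ℝ, 0 < c → ∀ y ∈ P, c • y ∈ P) (hPuniv : P ≠ Set.univ)
    (hq : q ∈ interior P) (z : Y) : BddAbove {t : ℝ | z - t • q ∈ P} := by
  by_contra hunb
  have hall : ∀ s : ℝ, z - s • q ∈ P := fun s => by
    obtain ⟨t, ht, hst⟩ := not_bddAbove_iff.1 hunb s
    exact interior_subset (sub_smul_mem_interior_of_lt hPconv hPcone hq hst ht)
  have hlim : Tendsto (fun t : ℝ => t⁻¹ • z + -q) atTop (𝓝 (-q)) := by
    simpa using (tendsto_inv_smul_atTop_zero z).add_const (-q)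
  refine neg_notMem_of_mem_interior_s19 hPconv hPcone hPuniv hq
    (hPclosed.mem_of_tendsto hlim ?_)
  filter_upwards [eventually_gt_atTop 0] with t ht
  simpa [smul_sub, smul_smul, ht.ne', sub_eq_add_neg] using hPcone t⁻¹ (inv_pos.2 ht) _ (hall t)

end Cone

section AsymptoticCone

variable {E : Type*} [AddCommGroup E] [Module ℝ E] (σ : TopologicalSpace E)

theorem asympCone_mono {A B : Set E} (h : A ⊆ B) : asympCone σ A ⊆ asympCone σ B := by
  rintro d ⟨t, x, ht, hx, hlim⟩
  exact ⟨t, x, ht, fun k => h (hx k), hlim⟩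

theorem zero_mem_asympCone [@ContinuousSMul ℝ E _ _ σ] {A : Set E} (hA : A.Nonempty) :
    (0 : E) ∈ asympCone σ A := by
  obtain ⟨x, hx⟩ := hA
  exact ⟨fun k => k, fun _ => x, tendsto_natCast_atTop_atTop, fun _ => hx,
    (tendsto_inv_smul_atTop_zero x).comp tendsto_natCast_atTop_atTop⟩

theorem horizonLimsup_subset_asympCone {A : ℕ → Set E} {B : Set E}
    (h : ∀ᶠ n in atTop, A n ⊆ B) : horizonLimsup σ A ⊆ asympCone σ B := by
  rintro u ⟨φ, hφ, x, t, hx, ht, hlim⟩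
  obtain ⟨N, hN⟩ := h.exists_forall_of_atTop
  refine ⟨fun j => t (j + N), fun j => x (j + N), ht.comp (tendsto_add_atTop_nat N),
    fun j => hN _ ?_ (hx (j + N)), hlim.comp (tendsto_add_atTop_nat N)⟩
  exact (Nat.le_add_left N j).trans hφ.le_apply

/-- The diagonal argument: along a countable basis `U n` of `𝓝 u`, pick from the `n`-th
asymptotic cone a point `s⁻¹ • y ∈ U n` with `s ≥ n`. -/
theorem mem_horizonLimsup_of_forall_mem_asympCone [@FirstCountableTopology E σ]
    {A : ℕ → Set E} {u : E} (h : ∀ n, u ∈ asympCone σ (A n)) : u ∈ horizonLimsup σ A := by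
  obtain ⟨U, hU⟩ := (@nhds E σ u).exists_antitone_basis
  have hpick : ∀ n : ℕ, ∃ y : E, ∃ s : ℝ, y ∈ A n ∧ (n : ℝ) ≤ s ∧ s⁻¹ • y ∈ U n := by
    intro n
    obtain ⟨t, x, ht, hx, hlim⟩ := h n
    obtain ⟨k, hk, hkU⟩ := ((ht.eventually_ge_atTop n).and
      (hlim.eventually_mem (hU.toHasBasis.mem_of_mem trivial))).exists
    exact ⟨x k, t k, hx k, hk, hkU⟩
  choose y s hyA hs hyU using hpick
  refine ⟨id, strictMono_id, y, s, hyA, tendsto_atTop_mono hs tendsto_natCast_atTop_atTop,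
    hU.toHasBasis.tendsto_right_iff.2 fun i _ => ?_⟩
  filter_upwards [eventually_ge_atTop i] with n hn
  exact hU.antitone hn (hyU n)

end AsymptoticCone

section Colevel

variable {E Y : Type*} [AddCommGroup Y] [Module ℝ Y] [TopologicalSpace Y]
  {P : Set Y} {q : Y} {K : Set E} {F : E → Set Y}

theorem ColevOn_mono [ContinuousAdd Y] (hPconv : Convex ℝ P)
    (hPcone : ∀ c : ℝ, 0 < c → ∀ y ∈ P, c • y ∈ P) (hq : q ∈ P) :
    Monotone (ColevOn P q K F) := fun _ _ hab _ hx =>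
  ⟨hx.1, fun hsub => hx.2 fun _ hz => sub_smul_mem_interior_of_le hPconv hPcone hq hab (hsub hz)⟩

theorem ColevOn_nonempty_of_MqOn_lt {lam : ℝ} (hlam : MqOn P q K F < lam) :
    (ColevOn P q K F lam).Nonempty := by
  have hnot : ¬ ∀ x ∈ K, ∀ z ∈ F x, z - lam • q ∈ P := fun hall =>
    hlam.not_ge (le_sSup ⟨lam, hall, rfl⟩)
  push Not at hnot
  obtain ⟨x, hxK, z, hz, hzP⟩ := hnot
  exact ⟨x, hxK, fun hsub => hzP (interior_subset (hsub hz))⟩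

theorem MqOn_le_of_ColevOn_nonempty [ContinuousAdd Y] [ContinuousConstSMul ℝ Y]
    (hPconv : Convex ℝ P)
    (hPcone : ∀ c : ℝ, 0 < c → ∀ y ∈ P, c • y ∈ P) (hq : q ∈ interior P) {lam : ℝ}
    (hne : (ColevOn P q K F lam).Nonempty) : MqOn P q K F ≤ lam := by
  obtain ⟨x, hxK, hxF⟩ := hne
  refine sSup_le ?_
  rintro _ ⟨t, ht, rfl⟩
  by_contra! hlt
  exact hxF fun z hz => sub_smul_mem_interior_of_lt hPconv hPcone hq
    (EReal.coe_lt_coe_iff.1 hlt) (ht x hxK z hz)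

theorem MqOn_lt_top [ContinuousAdd Y] [ContinuousSMul ℝ Y] (hPclosed : IsClosed P)
    (hPconv : Convex ℝ P)
    (hPcone : ∀ c : ℝ, 0 < c → ∀ y ∈ P, c • y ∈ P) (hPuniv : P ≠ Set.univ)
    (hq : q ∈ interior P) (hKne : K.Nonempty) (hF : ∀ x ∈ K, (F x).Nonempty) :
    MqOn P q K F < ⊤ := by
  obtain ⟨x, hx⟩ := hKne
  obtain ⟨z, hz⟩ := hF x hx
  obtain ⟨B, hB⟩ := bddAbove_setOf_sub_smul_mem_s19 hPclosed hPconv hPcone hPuniv hq z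
  refine lt_of_le_of_lt (sSup_le ?_) (EReal.coe_lt_top B)
  rintro _ ⟨t, ht, rfl⟩
  exact EReal.coe_le_coe_iff.2 (hB (ht x hx z hz))

variable [AddCommGroup E] [Module ℝ E] (σ : TopologicalSpace E)

theorem FGasymp_le_iff (hmono : Monotone (ColevOn P q K F)) {u : E} {m : EReal} :
    FGasymp σ P q K F u ≤ m ↔ ∀ lam : ℝ, m < lam → u ∈ asympCone σ (ColevOn P q K F lam) := by
  constructor
  · intro hle lam hlam
    obtain ⟨_, ⟨μ, hμ, rfl⟩, hμlam⟩ := sInf_lt_iff.1 (hle.trans_lt hlam)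
    exact asympCone_mono σ (hmono (EReal.coe_lt_coe_iff.1 hμlam).le) hμ
  · exact fun h => EReal.le_of_forall_lt_iff_le.1 fun c hc => sInf_le ⟨c, h c hc, rfl⟩

theorem FGasymp_zero [ContinuousAdd Y] [ContinuousConstSMul ℝ Y] [@ContinuousSMul ℝ E _ _ σ]
    (hPconv : Convex ℝ P) (hPcone : ∀ c : ℝ, 0 < c → ∀ y ∈ P, c • y ∈ P)
    (hq : q ∈ interior P) : FGasymp σ P q K F 0 = MqOn P q K F := by
  refine le_antisymm ?_ (le_sInf ?_)
  · exact (FGasymp_le_iff σ (ColevOn_mono hPconv hPcone (interior_subset hq))).2 fun lam hlam =>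
      zero_mem_asympCone σ (ColevOn_nonempty_of_MqOn_lt hlam)
  · rintro _ ⟨lam, ⟨_, x, _, hx, _⟩, rfl⟩
    exact MqOn_le_of_ColevOn_nonempty hPconv hPcone hq ⟨x 0, hx 0⟩

end Colevel

theorem EReal.exists_seq_antitone_tendsto_of_lt_top {m : EReal} (hm : m < ⊤) :
    ∃ lam : ℕ → ℝ, (∀ n, m < lam n) ∧ Antitone lam ∧
      Tendsto (fun n => (lam n : EReal)) atTop (𝓝 m) := by
  obtain ⟨u, hanti, hmem, hlim⟩ := exists_seq_strictAnti_tendsto' hm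
  have hcoe : ∀ n, ((u n).toReal : EReal) = u n := fun n =>
    EReal.coe_toReal (hmem n).2.ne (ne_bot_of_gt (hmem n).1)
  refine ⟨fun n => (u n).toReal, fun n => (hcoe n).symm ▸ (hmem n).1, fun a b hab => ?_,
    by simpa only [hcoe] using hlim⟩
  exact EReal.toReal_le_toReal (hanti.antitone hab) (ne_bot_of_gt (hmem b).1) (hmem a).2.ne

theorem stmt19_general {E Y : Type*} [NormedAddCommGroup E] [NormedSpace ℝ E]
    (σ : TopologicalSpace E)
    (hSMul : @ContinuousSMul ℝ E _ _ σ)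
    (hfc : @FirstCountableTopology E σ)
    [AddCommGroup Y] [Module ℝ Y] [TopologicalSpace Y]
    [IsTopologicalAddGroup Y] [ContinuousSMul ℝ Y]
    (P : Set Y) (hPclosed : IsClosed P) (hPconv : Convex ℝ P)
    (hPcone : ∀ c : ℝ, 0 < c → ∀ y ∈ P, c • y ∈ P)
    (hPuniv : P ≠ Set.univ)
    (q : Y) (hq : q ∈ interior P)
    (K : Set E) (hKne : K.Nonempty)
    (F : E → Set Y) (hF : ∀ x ∈ K, (F x).Nonempty) :
    (∀ u ∈ asympCone σ K, u ≠ 0 → FGasymp σ P q K F 0 < FGasymp σ P q K F u) ↔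
      (∀ lam : ℕ → ℝ, (∀ n, MqOn P q K F < ((lam n : ℝ) : EReal)) → Antitone lam →
        Tendsto (fun n => ((lam n : ℝ) : EReal)) atTop (nhds (MqOn P q K F)) →
        horizonLimsup σ (fun n => ColevOn P q K F (lam n)) = {0}) := by
  have hmono := ColevOn_mono (K := K) (F := F) hPconv hPcone (interior_subset hq)
  rw [FGasymp_zero σ hPconv hPcone hq]
  constructor
  · intro hopt lam hgt _ hlim
    refine Set.Subset.antisymm (fun u hu => ?_) ?_
    · by_contra hu0
      have huK := horizonLimsup_subset_asympCone σ (.of_forall fun _ => Set.sep_subset _ _) hu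
      refine (hopt u huK hu0).not_ge ((FGasymp_le_iff σ hmono).2 fun c hc => ?_)
      refine horizonLimsup_subset_asympCone σ ?_ hu
      filter_upwards [hlim.eventually_lt_const hc] with n hn
      exact hmono (EReal.coe_lt_coe_iff.1 hn).le
    · rintro _ rfl
      exact mem_horizonLimsup_of_forall_mem_asympCone σ fun n =>
        zero_mem_asympCone σ (ColevOn_nonempty_of_MqOn_lt (hgt n))
  · intro hcond u _ hu0
    by_contra! hle
    obtain ⟨lam, hgt, hanti, hlim⟩ := EReal.exists_seq_antitone_tendsto_of_lt_top
      (MqOn_lt_top hPclosed hPconv hPcone hPuniv hq hKne hF)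
    have hu := mem_horizonLimsup_of_forall_mem_asympCone σ fun n =>
      (FGasymp_le_iff σ hmono).1 hle (lam n) (hgt n)
    rw [hcond lam hgt hanti hlim] at hu
    exact hu0 hu

/-- If `(E, σ)` is first countable and `F` satisfies assumption (A), then the optimality
condition `F^{G,∞}_σ(u) > F^{G,∞}_σ(0)` for all `u ∈ K^∞_σ \ {0}` holds iff for every
real sequence `λ_n ↓ M_F^q` with `λ_n > M_F^q`,
`limsup_n^{σ,∞} Colev_{<ˡ}(F, λ_n q) = {0}`. -/
theorem stmt19 {E Y : Type*} [NormedAddCommGroup E] [NormedSpace ℝ E] [CompleteSpace E]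
    (σ : TopologicalSpace E)
    (hcoarse : (inferInstance : TopologicalSpace E) ≤ σ)
    (hT2 : @T2Space E σ) (hAddGrp : @IsTopologicalAddGroup E σ _)
    (hSMul : @ContinuousSMul ℝ E _ _ σ)
    (hfc : @FirstCountableTopology E σ)
    [AddCommGroup Y] [Module ℝ Y] [TopologicalSpace Y]
    [IsTopologicalAddGroup Y] [ContinuousSMul ℝ Y] [T2Space Y]
    (P : Set Y) (hPclosed : IsClosed P) (hPconv : Convex ℝ P)
    (hP0 : (0 : Y) ∈ P) (hPcone : ∀ c : ℝ, 0 < c → ∀ y ∈ P, c • y ∈ P)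
    (hPne : P ≠ {0}) (hPuniv : P ≠ Set.univ)
    (q : Y) (hq : q ∈ interior P)
    (K : Set E) (hKne : K.Nonempty)
    (F : E → Set Y) (hF : ∀ x ∈ K, (F x).Nonempty)
    (hA : ∀ x ∈ K, ∃ z ∈ F x, ∀ w ∈ F x, psi P q z ≤ psi P q w) :
    (∀ u ∈ asympCone σ K, u ≠ 0 → FGasymp σ P q K F 0 < FGasymp σ P q K F u) ↔
      (∀ lam : ℕ → ℝ, (∀ n, MqOn P q K F < ((lam n : ℝ) : EReal)) → Antitone lam →
        Tendsto (fun n => ((lam n : ℝ) : EReal)) atTop (nhds (MqOn P q K F)) →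
        horizonLimsup σ (fun n => ColevOn P q K F (lam n)) = {0}) :=
  stmt19_general σ hSMul hfc P hPclosed hPconv hPcone hPuniv q hq K hKne F hF
end
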